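/- Under the conformal-block-expansion setup below, let ε ∈ (0, 2Δφ), set τ* := 2Δφ − ε, and assume there exist 0 < a < b < 1, constants C₁, C₂ > 0 and functions F_i : (0,1) → (0,∞) such that for every i ∈ I with τ_i ≤ τ* and all z, z̄ with 0 < z̄ ≤ a < b ≤ z < 1 one has C₁ · z̄^{τ_i/2} F_i(z) ≤ g_i(z, z̄) ≤ C₂ · z̄^{τ_i/2} F_i(z). Then for all z, z̄, z̄' with 0 < z ≤ 1−b < 1−a ≤ z̄ ≤ z̄' < 1 one has (z z̄ / ((1−z)(1−z̄)))^{Δφ} · ∑_{i ∈ I : τ_i ≤ τ*} p_i · g_i(1−z, 1−z̄) ≤ (C₂/C₁) · ((1−z̄')/(1−z̄))^{ε/2} · g(z, z̄'). -/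

import Mathlib

/-!
For a block of twist `τᵢ ≤ 2Δφ - ε`, approximate factorization in the crossed channel gives
`gᵢ(1-z, 1-z̄) ≤ (C₂/C₁) s^(-τᵢ/2) gᵢ(1-z, 1-z̄')` with `s = (1-z̄')/(1-z̄) ≤ 1`, while moving `z̄`
up to `z̄'` multiplies the crossing prefactor `(z z̄/((1-z)(1-z̄)))^Δφ` by at least `s^(-Δφ)`.
Since `Δφ - τᵢ/2 ≥ ε/2`, each low-twist term is bounded by `(C₂/C₁) s^(ε/2)` times its value at
`z̄'`. Summing, adding the remaining blocks and the unit operator, and crossing back at `(z, z̄')`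
yields `g(z, z̄')`.
-/

open Set

/-- A single conformal block contribution:
`g_i(z, z̄) = (z z̄)^(τᵢ/2) ∑_{n,m} a^{(i)}_{n,m} z^n z̄^m`. -/
noncomputable def blockFun (τi : ℝ) (coef : ℕ × ℕ → ℝ) (z zb : ℝ) : ℝ :=
  (z * zb) ^ (τi / 2) * ∑' nm : ℕ × ℕ, coef nm * z ^ nm.1 * zb ^ nm.2

noncomputable def crossingPrefactor (Δφ z zb : ℝ) : ℝ :=
  (z * zb / ((1 - z) * (1 - zb))) ^ Δφ

section CrossingPrefactor

variable {Δφ z zb zb' : ℝ}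

lemma crossingPrefactor_nonneg (hz : 0 ≤ z) (hz1 : z < 1) (hzb : 0 ≤ zb) (hzb1 : zb < 1) :
    0 ≤ crossingPrefactor Δφ z zb :=
  Real.rpow_nonneg
    (div_nonneg (mul_nonneg hz hzb) (mul_nonneg (by linarith) (by linarith))) _

lemma crossingPrefactor_le (hΔ : 0 ≤ Δφ) (hz : 0 ≤ z) (hz1 : z < 1)
    (hzb : 0 ≤ zb) (hle : zb ≤ zb') (hzb' : zb' < 1) :
    crossingPrefactor Δφ z zb ≤
      crossingPrefactor Δφ z zb' * ((1 - zb') / (1 - zb)) ^ Δφ := by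
  have h1z : 0 < 1 - z := by linarith
  have h1zb' : 0 < 1 - zb' := by linarith
  have h1zb : 0 < 1 - zb := by linarith
  have hcancel : z * zb' / ((1 - z) * (1 - zb')) * ((1 - zb') / (1 - zb)) =
      z * zb' / ((1 - z) * (1 - zb)) := by
    field_simp
  unfold crossingPrefactor
  rw [← Real.mul_rpow (div_nonneg (by nlinarith) (mul_pos h1z h1zb').le)
    (div_pos h1zb' h1zb).le, hcancel]
  gcongr

end CrossingPrefactor

lemma blockFun_nonneg {τi : ℝ} {coef : ℕ × ℕ → ℝ} (hcoef : ∀ nm, 0 ≤ coef nm) {z zb : ℝ}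
    (hz : 0 ≤ z) (hzb : 0 ≤ zb) : 0 ≤ blockFun τi coef z zb :=
  mul_nonneg (Real.rpow_nonneg (mul_nonneg hz hzb) _) <|
    tsum_nonneg fun nm => mul_nonneg (mul_nonneg (hcoef nm) (pow_nonneg hz _)) (pow_nonneg hzb _)

lemma le_mul_rpow_div_mul_of_factorized {C₁ C₂ t u u' f g g' : ℝ} (hC₁ : 0 < C₁)
    (hC₂ : 0 ≤ C₂) (hu : 0 ≤ u) (hu' : 0 < u') (hupper : g ≤ C₂ * (u ^ t * f))
    (hlower : C₁ * (u' ^ t * f) ≤ g') :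
    g ≤ C₂ / C₁ * (u / u') ^ t * g' := by
  have hu't : 0 < u' ^ t := Real.rpow_pos_of_pos hu' t
  calc g ≤ C₂ * (u ^ t * f) := hupper
    _ = C₂ / C₁ * (u / u') ^ t * (C₁ * (u' ^ t * f)) := by
      rw [Real.div_rpow hu hu'.le]
      field_simp
    _ ≤ C₂ / C₁ * (u / u') ^ t * g' := by gcongr

lemma rpow_mul_inv_rpow_le {s Δφ τi ε : ℝ} (hs0 : 0 < s) (hs1 : s ≤ 1)
    (hτ : τi ≤ 2 * Δφ - ε) :
    s ^ Δφ * s⁻¹ ^ (τi / 2) ≤ s ^ (ε / 2) := by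
  rw [Real.inv_rpow hs0.le, ← Real.rpow_neg hs0.le, ← Real.rpow_add hs0]
  exact Real.rpow_le_rpow_of_exponent_ge hs0 hs1 (by linarith)

lemma crossingPrefactor_mul_le_of_factorized {Δφ ε τi C₁ C₂ f g g' z zb zb' : ℝ}
    (hΔ : 0 ≤ Δφ) (hτ : τi ≤ 2 * Δφ - ε) (hC₁ : 0 < C₁) (hC₂ : 0 ≤ C₂)
    (hz : 0 ≤ z) (hz1 : z < 1) (hzb : 0 ≤ zb) (hle : zb ≤ zb') (hzb' : zb' < 1)
    (hupper : g ≤ C₂ * ((1 - zb) ^ (τi / 2) * f))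
    (hlower : C₁ * ((1 - zb') ^ (τi / 2) * f) ≤ g') (hg' : 0 ≤ g') :
    crossingPrefactor Δφ z zb * g ≤
      C₂ / C₁ * ((1 - zb') / (1 - zb)) ^ (ε / 2) * (crossingPrefactor Δφ z zb' * g') := by
  have h1zb : 0 < 1 - zb := by linarith
  set s := (1 - zb') / (1 - zb)
  have hs0 : 0 < s := div_pos (by linarith) h1zb
  have hs1 : s ≤ 1 := (div_le_one h1zb).2 (by linarith)
  have hA : 0 ≤ crossingPrefactor Δφ z zb := crossingPrefactor_nonneg hz hz1 hzb (by linarith)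
  have hA' : 0 ≤ crossingPrefactor Δφ z zb' :=
    crossingPrefactor_nonneg hz hz1 (by linarith) hzb'
  have hg : g ≤ C₂ / C₁ * s⁻¹ ^ (τi / 2) * g' := by
    rw [inv_div]
    exact le_mul_rpow_div_mul_of_factorized hC₁ hC₂ h1zb.le (by linarith) hupper hlower
  calc crossingPrefactor Δφ z zb * g
      ≤ crossingPrefactor Δφ z zb * (C₂ / C₁ * s⁻¹ ^ (τi / 2) * g') := by gcongr
    _ ≤ crossingPrefactor Δφ z zb' * s ^ Δφ * (C₂ / C₁ * s⁻¹ ^ (τi / 2) * g') := by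
        gcongr
        exact crossingPrefactor_le hΔ hz hz1 hzb hle hzb'
    _ = C₂ / C₁ * (s ^ Δφ * s⁻¹ ^ (τi / 2)) * (crossingPrefactor Δφ z zb' * g') := by ring
    _ ≤ C₂ / C₁ * s ^ (ε / 2) * (crossingPrefactor Δφ z zb' * g') := by
        gcongr
        exact rpow_mul_inv_rpow_le hs0 hs1 hτ

lemma mul_tsum_subtype_le_mul_tsum {ι : Type*} {P : ι → Prop} {f g : ι → ℝ} {c K : ℝ}
    (hK : 0 ≤ K) (hg : ∀ i, 0 ≤ g i) (hf : Summable f) (hgs : Summable g)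
    (h : ∀ i, P i → c * f i ≤ K * g i) :
    c * ∑' i : {i // P i}, f i ≤ K * ∑' i, g i :=
  calc c * ∑' i : {i // P i}, f i
      = ∑' i : {i // P i}, c * f i := tsum_mul_left.symm
    _ ≤ ∑' i : {i // P i}, K * g i :=
        Summable.tsum_le_tsum (fun i => h i i.2) ((hf.subtype _).mul_left c)
          ((hgs.subtype _).mul_left K)
    _ = K * ∑' i : {i // P i}, g i := tsum_mul_left
    _ ≤ K * ∑' i, g i := by
        gcongr
        exact hgs.tsum_subtype_le g {i | P i} hg

theorem stmt7_general {I : Type*} [Countable I] (Δφ : ℝ) (hΔ : 0 < Δφ)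
    (p τ : I → ℝ) (coef : I → ℕ × ℕ → ℝ)
    (hp : ∀ i, 0 ≤ p i) (hcoef : ∀ i nm, 0 ≤ coef i nm)
    (hsum : ∀ z zb : ℝ, z ∈ Ioo (0:ℝ) 1 → zb ∈ Ioo (0:ℝ) 1 →
      Summable (fun i => p i * blockFun (τ i) (coef i) z zb))
    (hcross : ∀ z zb : ℝ, z ∈ Ioo (0:ℝ) 1 → zb ∈ Ioo (0:ℝ) 1 →
      1 + ∑' i, p i * blockFun (τ i) (coef i) z zb =
        (z * zb / ((1 - z) * (1 - zb))) ^ Δφ *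
          (1 + ∑' i, p i * blockFun (τ i) (coef i) (1 - z) (1 - zb)))
    (ε : ℝ)
    (a b : ℝ) (hab : a < b) (hb : b < 1)
    (C₁ C₂ : ℝ) (hC₁ : 0 < C₁) (hC₂ : 0 < C₂) (F : I → ℝ → ℝ)
    (hfact : ∀ i, τ i ≤ 2 * Δφ - ε → ∀ z zb : ℝ, 0 < zb → zb ≤ a → b ≤ z → z < 1 →
      C₁ * (zb ^ (τ i / 2) * F i z) ≤ blockFun (τ i) (coef i) z zb ∧
        blockFun (τ i) (coef i) z zb ≤ C₂ * (zb ^ (τ i / 2) * F i z)) :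
    ∀ z zb zb' : ℝ, 0 < z → z ≤ 1 - b → 1 - a ≤ zb → zb ≤ zb' → zb' < 1 →
      (z * zb / ((1 - z) * (1 - zb))) ^ Δφ *
        (∑' i : {j : I // τ j ≤ 2 * Δφ - ε},
          p i.1 * blockFun (τ i.1) (coef i.1) (1 - z) (1 - zb)) ≤
        (C₂ / C₁) * ((1 - zb') / (1 - zb)) ^ (ε / 2) *
          (1 + ∑' i, p i * blockFun (τ i) (coef i) z zb') := by
  intro z zb zb' hz hz_le hzb_ge hle hzb'
  have hw : 1 - z ∈ Ioo (0 : ℝ) 1 := ⟨by linarith, by linarith⟩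
  have hu : 1 - zb ∈ Ioo (0 : ℝ) 1 := ⟨by linarith, by linarith⟩
  have hu' : 1 - zb' ∈ Ioo (0 : ℝ) 1 := ⟨by linarith, by linarith⟩
  set K := C₂ / C₁ * ((1 - zb') / (1 - zb)) ^ (ε / 2)
  set G := fun (x y : ℝ) (i : I) => p i * blockFun (τ i) (coef i) x y
  have hG : ∀ i, 0 ≤ G (1 - z) (1 - zb') i := fun i =>
    mul_nonneg (hp i) (blockFun_nonneg (hcoef i) hw.1.le hu'.1.le)
  have hK : 0 ≤ K :=
    mul_nonneg (div_nonneg hC₂.le hC₁.le) (Real.rpow_nonneg (div_nonneg hu'.1.le hu.1.le) _)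
  have hKA : 0 ≤ K * crossingPrefactor Δφ z zb' :=
    mul_nonneg hK (crossingPrefactor_nonneg hz.le (by linarith) (by linarith) hzb')
  have hlow : ∀ i, τ i ≤ 2 * Δφ - ε → crossingPrefactor Δφ z zb * G (1 - z) (1 - zb) i ≤
      K * crossingPrefactor Δφ z zb' * G (1 - z) (1 - zb') i := fun i hi => by
    have key := crossingPrefactor_mul_le_of_factorized hΔ.le hi hC₁ hC₂.le hz.le (by linarith)
      (by linarith) hle hzb' (hfact i hi _ _ hu.1 (by linarith) (by linarith) hw.2).2
      (hfact i hi _ _ hu'.1 (by linarith) (by linarith) hw.2).1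
      (blockFun_nonneg (hcoef i) hw.1.le hu'.1.le)
    simp only [G]
    linear_combination mul_le_mul_of_nonneg_left key (hp i)
  calc _ ≤ K * crossingPrefactor Δφ z zb' * ∑' i, G (1 - z) (1 - zb') i :=
        mul_tsum_subtype_le_mul_tsum hKA hG (hsum _ _ hw hu) (hsum _ _ hw hu') hlow
    _ ≤ K * crossingPrefactor Δφ z zb' * (1 + ∑' i, G (1 - z) (1 - zb') i) := by
        gcongr
        exact le_add_of_nonneg_left zero_le_one
    _ = K * (1 + ∑' i, p i * blockFun (τ i) (coef i) z zb') := by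
        rw [hcross z zb' ⟨hz, by linarith⟩ ⟨by linarith, hzb'⟩, mul_assoc]
        rfl

/-- crossed-channel low-twist estimate, Eq. (2.36): with approximate
factorization for the blocks of twist `τᵢ ≤ τ* = 2Δφ - ε`, for all
`0 < z ≤ 1-b < 1-a ≤ z̄ ≤ z̄' < 1` one has
`(z z̄/((1-z)(1-z̄)))^Δφ ∑_{τᵢ ≤ τ*} pᵢ gᵢ(1-z,1-z̄)
  ≤ (C₂/C₁) ((1-z̄')/(1-z̄))^(ε/2) g(z, z̄')`. -/
theorem stmt7 {I : Type*} [Countable I] (Δφ : ℝ) (hΔ : 0 < Δφ)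
    (p τ : I → ℝ) (coef : I → ℕ × ℕ → ℝ)
    (hp : ∀ i, 0 ≤ p i) (hτ : ∀ i, 0 ≤ τ i) (hcoef : ∀ i nm, 0 ≤ coef i nm)
    (hinner : ∀ i, ∀ z zb : ℝ, 0 ≤ z → z < 1 → 0 ≤ zb → zb < 1 →
      Summable (fun nm : ℕ × ℕ => coef i nm * z ^ nm.1 * zb ^ nm.2))
    (hsum : ∀ z zb : ℝ, z ∈ Ioo (0:ℝ) 1 → zb ∈ Ioo (0:ℝ) 1 →
      Summable (fun i => p i * blockFun (τ i) (coef i) z zb))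
    (hcross : ∀ z zb : ℝ, z ∈ Ioo (0:ℝ) 1 → zb ∈ Ioo (0:ℝ) 1 →
      1 + ∑' i, p i * blockFun (τ i) (coef i) z zb =
        (z * zb / ((1 - z) * (1 - zb))) ^ Δφ *
          (1 + ∑' i, p i * blockFun (τ i) (coef i) (1 - z) (1 - zb)))
    (ε : ℝ) (hε0 : 0 < ε) (hε2 : ε < 2 * Δφ)
    (a b : ℝ) (ha : 0 < a) (hab : a < b) (hb : b < 1)
    (C₁ C₂ : ℝ) (hC₁ : 0 < C₁) (hC₂ : 0 < C₂) (F : I → ℝ → ℝ)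
    (hFpos : ∀ i, ∀ z : ℝ, 0 < z → z < 1 → 0 < F i z)
    (hfact : ∀ i, τ i ≤ 2 * Δφ - ε → ∀ z zb : ℝ, 0 < zb → zb ≤ a → b ≤ z → z < 1 →
      C₁ * (zb ^ (τ i / 2) * F i z) ≤ blockFun (τ i) (coef i) z zb ∧
        blockFun (τ i) (coef i) z zb ≤ C₂ * (zb ^ (τ i / 2) * F i z)) :
    ∀ z zb zb' : ℝ, 0 < z → z ≤ 1 - b → 1 - a ≤ zb → zb ≤ zb' → zb' < 1 →
      (z * zb / ((1 - z) * (1 - zb))) ^ Δφ *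
        (∑' i : {j : I // τ j ≤ 2 * Δφ - ε},
          p i.1 * blockFun (τ i.1) (coef i.1) (1 - z) (1 - zb)) ≤
        (C₂ / C₁) * ((1 - zb') / (1 - zb)) ^ (ε / 2) *
          (1 + ∑' i, p i * blockFun (τ i) (coef i) z zb') :=
  stmt7_general Δφ hΔ p τ coef hp hcoef hsum hcross ε a b hab hb C₁ C₂ hC₁ hC₂ F hfact
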